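/- arXiv:2212.06358 — 3 statements merged into one kernel-verified Lean document; each statement's English description precedes it below -/
import Mathlib

section
/- Let (F_k)_{k≥0} be a sequence of nonnegative real numbers with F_1 = F_0, and let a_1 ∈ ℝ and a_2 ∈ ℝ satisfy a_2 ≥ 0 and a_1 + a_2 < 1. If F_{k+1} ≤ a_1·F_k + a_2·F_{k−1} for every k ≥ 1, then for every k ≥ 0 one has F_{k+1} ≤ q^k·(1 + p)·F_0, where p = (√(a_1² + 4a_2) − a_1)/2 and q = (√(a_1² + 4a_2) + a_1)/2. -/
/-- Lemma 9 of [20LR]: if a sequence of nonnegative reals with `F 1 = F 0`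
satisfies `F (k+1) ≤ a₁ F k + a₂ F (k-1)` for `k ≥ 1`, where `a₂ ≥ 0` and `a₁ + a₂ < 1`,
then `F (k+1) ≤ q ^ k * (1 + p) * F 0` for all `k ≥ 0`, where
`p = (√(a₁² + 4a₂) − a₁)/2` and `q = (√(a₁² + 4a₂) + a₁)/2`. -/
theorem stmt0 (F : ℕ → ℝ) (a1 a2 : ℝ)
    (hFnonneg : ∀ k, 0 ≤ F k) (hF10 : F 1 = F 0)
    (ha2 : 0 ≤ a2) (ha12 : a1 + a2 < 1)
    (hrec : ∀ k, 1 ≤ k → F (k + 1) ≤ a1 * F k + a2 * F (k - 1)) :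
    ∀ k, F (k + 1) ≤
      ((Real.sqrt (a1 ^ 2 + 4 * a2) + a1) / 2) ^ k *
        (1 + (Real.sqrt (a1 ^ 2 + 4 * a2) - a1) / 2) * F 0 := by
  set s := Real.sqrt (a1 ^ 2 + 4 * a2) with hs
  set p := (s - a1) / 2 with hpdef
  set q := (s + a1) / 2 with hqdef
  have hsnn : (0:ℝ) ≤ a1 ^ 2 + 4 * a2 := by positivity
  have habs : |a1| ≤ s := by
    rw [hs, ← Real.sqrt_sq_eq_abs]
    exact Real.sqrt_le_sqrt (by linarith)
  have h1 := neg_abs_le a1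
  have h2 := le_abs_self a1
  have hp : 0 ≤ p := by rw [hpdef]; linarith
  have hq : 0 ≤ q := by rw [hqdef]; linarith
  have hs2 : s ^ 2 = a1 ^ 2 + 4 * a2 := Real.sq_sqrt hsnn
  have hpq : p * q = a2 := by rw [hpdef, hqdef]; nlinarith [hs2]
  have key : ∀ k, F (k + 1) + p * F k ≤ q ^ k * (1 + p) * F 0 := by
    intro k
    induction k with
    | zero => simp [hF10]; ring_nf; exact le_refl _
    | succ n ih =>
      have hr := hrec (n + 1) (by omega)
      simp only [Nat.add_sub_cancel] at hr
      have hstep : F (n + 1 + 1) + p * F (n + 1) ≤ q * (F (n + 1) + p * F n) := by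
        have hq_eq : a1 + p = q := by rw [hpdef, hqdef]; ring
        have h3 : q * (F (n + 1) + p * F n) = q * F (n + 1) + a2 * F n := by
          rw [← hpq]; ring
        have h4 : q * F (n + 1) = a1 * F (n + 1) + p * F (n + 1) := by
          rw [← hq_eq]; ring
        linarith [hr]
      calc F (n + 1 + 1) + p * F (n + 1) ≤ q * (F (n + 1) + p * F n) := hstep
        _ ≤ q * (q ^ n * (1 + p) * F 0) := mul_le_mul_of_nonneg_left ih hq
        _ = q ^ (n + 1) * (1 + p) * F 0 := by ring
  intro k
  have := key k
  nlinarith [mul_nonneg hp (hFnonneg k)]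
end

section
/- Assume m ≥ 2. Let x^{(0)} ∈ range(Aᴴ) and for k ≥ 0 define the MWRK iterate x^{(k+1)} = x^{(k)} + ((b_{i_k} − A_{i_k,:} x^{(k)})/‖A_{i_k,:}‖₂²)·(A_{i_k,:})ᴴ, where i_k is an index maximizing ψ_i(x^{(k)}) over i ∈ {1,…,m}. Then for every k ≥ 0, ‖x^{(k+1)} − x_*‖₂² ≤ (1 − σ_r(A)²/γ̃)^k · (1 − σ_r(A)²/‖A‖_F²) · ‖x^{(0)} − x_*‖₂², where γ̃ = max_{i∈{1,…,m}} Σ_{j≠i} ‖A_{j,:}‖₂². -/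
open Matrix Finset

noncomputable section

/-- Squared Euclidean norm `‖v‖₂²` of a complex vector. -/
def vecNormSq {k : ℕ} (v : Fin k → ℂ) : ℝ := ∑ i, ‖v i‖ ^ 2

variable {m n : ℕ}

/-- Squared Euclidean norm `‖A_{i,:}‖₂²` of the `i`-th row of `A`. -/
def rowNormSq (A : Matrix (Fin m) (Fin n) ℂ) (i : Fin m) : ℝ := ∑ j, ‖A i j‖ ^ 2

/-- Squared Frobenius norm `‖A‖_F²`. -/
def frobSq (A : Matrix (Fin m) (Fin n) ℂ) : ℝ := ∑ i, ∑ j, ‖A i j‖ ^ 2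

/-- `ψ_i(x) = |b_i − A_{i,:} x|² / ‖A_{i,:}‖₂²`. -/
def psi (A : Matrix (Fin m) (Fin n) ℂ) (b : Fin m → ℂ) (x : Fin n → ℂ) (i : Fin m) : ℝ :=
  ‖b i - A.mulVec x i‖ ^ 2 / rowNormSq A i

/-- `max_{i ∈ [m]} ψ_i(x)`. -/
def psiMax (A : Matrix (Fin m) (Fin n) ℂ) (b : Fin m → ℂ) (x : Fin n → ℂ) : ℝ :=
  ⨆ i, psi A b x i

/-- The row submatrix `A_{S,:}` of `A`, realized by replacing the rows outside `S` with zero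
(which changes neither the Frobenius norm nor the largest singular value). -/
def rowSub (A : Matrix (Fin m) (Fin n) ℂ) (S : Finset (Fin m)) : Matrix (Fin m) (Fin n) ℂ :=
  fun i j => if i ∈ S then A i j else 0

/-- `σ_r(A)²` : the smallest nonzero eigenvalue of `AᴴA`. -/
def sigmaRSq (A : Matrix (Fin m) (Fin n) ℂ) : ℝ :=
  sInf {μ : ℝ | μ ≠ 0 ∧ ∃ i, (Matrix.isHermitian_conjTranspose_mul_self A).eigenvalues i = μ}

/-- `σ₁(M)²` : the largest eigenvalue of `MᴴM`, i.e. the largest singular value squared. -/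
def sigma1Sq {k : Type*} [Fintype k] (M : Matrix k (Fin n) ℂ) : ℝ :=
  ⨆ i, (Matrix.isHermitian_conjTranspose_mul_self M).eigenvalues i

/-- `Û(x) = {i ∈ [m] : ψ_i(x) ≠ 0}`. -/
def Uhat (A : Matrix (Fin m) (Fin n) ℂ) (b : Fin m → ℂ) (x : Fin n → ℂ) : Finset (Fin m) :=
  Finset.univ.filter fun i => psi A b x i ≠ 0

/-- The greedy index set `U(x)` with relaxation parameter `θ = 1/2`. -/
def Ugreedy (A : Matrix (Fin m) (Fin n) ℂ) (b : Fin m → ℂ) (x : Fin n → ℂ) : Finset (Fin m) :=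
  Finset.univ.filter fun i =>
    (1 / 2) * psiMax A b x + (1 / 2) * (vecNormSq (b - A.mulVec x) / frobSq A) ≤ psi A b x i

/-- `η(x) = Σ_{i ∈ U(x)} (b_i − A_{i,:}x) e_i`. -/
def eta (A : Matrix (Fin m) (Fin n) ℂ) (b : Fin m → ℂ) (x : Fin n → ℂ) : Fin m → ℂ :=
  fun i => if i ∈ Ugreedy A b x then b i - A.mulVec x i else 0

/-- `uᴴ v`, the conjugate dot product. -/
def dotc {k : ℕ} (u v : Fin k → ℂ) : ℂ := ∑ i, (starRingEnd ℂ) (u i) * v i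

/-- `φ(x, η) = |ηᴴ(b − A x)|² / ‖Aᴴ η‖₂²`. -/
def phi (A : Matrix (Fin m) (Fin n) ℂ) (b : Fin m → ℂ) (x : Fin n → ℂ) (η : Fin m → ℂ) : ℝ :=
  ‖dotc η (b - A.mulVec x)‖ ^ 2 / vecNormSq (Aᴴ.mulVec η)

end

/-!
An MWRK step replaces the error `e = x^{(k)} - x_*` by `e` minus its projection onto
`A_{i_k,:}ᴴ`, so by Pythagoras the squared error drops by exactly `ψ_{i_k}(x^{(k)}) = max_i ψ_i`.
The error stays in `range(Aᴴ)`, hence `σ_r(A)² ‖e‖² ≤ ‖A e‖² = Σ_i ψ_i ‖A_{i,:}‖² ≤ ψ_{i_k} W`,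
where `W` is the sum of `‖A_{i,:}‖²` over the rows with nonzero residual. This gives the factor
`1 - σ_r(A)²/‖A‖_F²` for the first step; afterwards the row used in the previous step has zero
residual, so `W ≤ γ̃`. Finally `1 - σ_r(A)²/γ̃ ≥ 0` unless `AᴴA` has a single nonzero eigenvalue,
and then `σ_r(A)² = ‖A‖_F²`, so the first step already reaches `x_*`.
-/

open scoped InnerProductSpace

section OrthogonalStep

variable {𝕜 E : Type*} [RCLike 𝕜] [NormedAddCommGroup E] [InnerProductSpace 𝕜 E]

lemma norm_sub_inner_div_inner_self_smul_sq (w e : E) :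
    ‖e - (⟪w, e⟫_𝕜 / ⟪w, w⟫_𝕜) • w‖ ^ 2 = ‖e‖ ^ 2 - ‖⟪w, e⟫_𝕜‖ ^ 2 / ‖w‖ ^ 2 := by
  rcases eq_or_ne w 0 with rfl | hw
  · simp
  have hw0 : ‖w‖ ≠ 0 := norm_ne_zero_iff.mpr hw
  rw [@norm_sub_sq 𝕜, inner_smul_right, ← inner_conj_symm e w, div_mul_eq_mul_div, RCLike.mul_conj,
    norm_smul, norm_div, inner_self_eq_norm_sq_to_K]
  norm_cast
  rw [abs_of_nonneg (by positivity)]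
  field_simp
  ring

lemma inner_sub_inner_div_inner_self_smul (w e : E) :
    ⟪w, e - (⟪w, e⟫_𝕜 / ⟪w, w⟫_𝕜) • w⟫_𝕜 = 0 := by
  rcases eq_or_ne w 0 with rfl | hw
  · simp
  rw [inner_sub_right, inner_smul_right, div_mul_cancel₀ _ (inner_self_ne_zero.mpr hw), sub_self]

end OrthogonalStep

lemma inner_toLp_conjTranspose_mulVec {ι κ 𝕜 : Type*} [Fintype ι] [Fintype κ] [RCLike 𝕜]
    (M : Matrix ι κ 𝕜) (u : κ → 𝕜) (w : ι → 𝕜) :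
    ⟪WithLp.toLp 2 u, WithLp.toLp 2 (Mᴴ *ᵥ w)⟫_𝕜 = ⟪WithLp.toLp 2 (M *ᵥ u), WithLp.toLp 2 w⟫_𝕜 := by
  simp only [EuclideanSpace.inner_toLp_toLp, star_mulVec, dotProduct_comm _ (star u ᵥ* Mᴴ),
    ← dotProduct_mulVec]
  exact dotProduct_comm _ _

lemma Matrix.IsHermitian.re_inner_mulVec_eq_sum {ι 𝕜 : Type*} [Fintype ι] [DecidableEq ι]
    [RCLike 𝕜] {M : Matrix ι ι 𝕜} (hM : M.IsHermitian) (v : ι → 𝕜) :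
    RCLike.re ⟪WithLp.toLp 2 v, WithLp.toLp 2 (M *ᵥ v)⟫_𝕜 =
      ∑ i, hM.eigenvalues i * ‖⟪hM.eigenvectorBasis i, WithLp.toLp 2 v⟫_𝕜‖ ^ 2 := by
  rw [← hM.eigenvectorBasis.sum_inner_mul_inner, map_sum]
  refine sum_congr rfl fun i _ => ?_
  have hB : ⟪hM.eigenvectorBasis i, WithLp.toLp 2 (M *ᵥ v)⟫_𝕜 =
      hM.eigenvalues i * ⟪hM.eigenvectorBasis i, WithLp.toLp 2 v⟫_𝕜 := by
    have h := inner_toLp_conjTranspose_mulVec M (hM.eigenvectorBasis i) v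
    rw [hM.eq, WithLp.toLp_ofLp, hM.mulVec_eigenvectorBasis] at h
    rw [h, WithLp.toLp_smul, WithLp.toLp_ofLp, RCLike.real_smul_eq_coe_smul (K := 𝕜),
      inner_smul_left, RCLike.conj_ofReal]
  rw [hB, ← inner_conj_symm, mul_left_comm, RCLike.conj_mul]
  norm_cast

lemma le_pow_mul_of_forall_succ_le {E : ℕ → ℝ} {a c : ℝ} (hE : ∀ j, 0 ≤ E j)
    (h₀ : E 1 ≤ c * E 0) (h : ∀ j, E (j + 2) ≤ a * E (j + 1)) (hac : 0 ≤ a ∨ c = 0) (k : ℕ) :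
    E (k + 1) ≤ a ^ k * c * E 0 := by
  rcases hac with ha | rfl
  · induction k with
    | zero => simpa using h₀
    | succ k ih =>
      calc E (k + 2) ≤ a * E (k + 1) := h k
        _ ≤ a * (a ^ k * c * E 0) := mul_le_mul_of_nonneg_left ih ha
        _ = a ^ (k + 1) * c * E 0 := by ring
  · suffices E (k + 1) = 0 by simp [this]
    induction k with
    | zero => exact le_antisymm (by simpa using h₀) (hE 1)
    | succ k ih => exact le_antisymm (by simpa [ih] using h k) (hE _)

variable {m n : ℕ}

lemma vecNormSq_eq_norm_sq {k : ℕ} (v : Fin k → ℂ) : vecNormSq v = ‖WithLp.toLp 2 v‖ ^ 2 := by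
  rw [EuclideanSpace.norm_sq_eq]; rfl

lemma rowNormSq_nonneg (A : Matrix (Fin m) (Fin n) ℂ) (i : Fin m) : 0 ≤ rowNormSq A i := by
  unfold rowNormSq; positivity

lemma frobSq_nonneg (A : Matrix (Fin m) (Fin n) ℂ) : 0 ≤ frobSq A := by
  unfold frobSq; positivity

lemma frobSq_le_two_mul_iSup_sum_erase (hm : 2 ≤ m) (A : Matrix (Fin m) (Fin n) ℂ) :
    frobSq A ≤ 2 * ⨆ i : Fin m, ∑ j ∈ univ.erase i, rowNormSq A j := by
  set i₀ : Fin m := ⟨0, by omega⟩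
  set i₁ : Fin m := ⟨1, hm⟩
  have hne : i₀ ≠ i₁ := by simp [i₀, i₁, Fin.ext_iff]
  have hF : frobSq A = ∑ j, rowNormSq A j := rfl
  have hpair : rowNormSq A i₀ + rowNormSq A i₁ ≤ frobSq A := by
    rw [hF, ← sum_pair hne]
    exact sum_le_sum_of_subset_of_nonneg (subset_univ _) fun j _ _ => rowNormSq_nonneg A j
  have hbdd : BddAbove (Set.range fun i : Fin m => ∑ j ∈ univ.erase i, rowNormSq A j) :=
    (Set.finite_range _).bddAbove
  have h₀ := le_ciSup hbdd i₀
  have h₁ := le_ciSup hbdd i₁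
  simp only [sum_erase_eq_sub (mem_univ _), ← hF] at h₀ h₁ ⊢
  linarith

lemma rowNormSq_eq_norm_sq (A : Matrix (Fin m) (Fin n) ℂ) (i : Fin m) :
    rowNormSq A i = ‖WithLp.toLp 2 (star (A i))‖ ^ 2 := by
  simp [← vecNormSq_eq_norm_sq, vecNormSq, rowNormSq]

lemma inner_toLp_star_row (A : Matrix (Fin m) (Fin n) ℂ) (i : Fin m) (v : Fin n → ℂ) :
    ⟪WithLp.toLp 2 (star (A i)), WithLp.toLp 2 v⟫_ℂ = (A *ᵥ v) i := by
  simp [EuclideanSpace.inner_toLp_toLp, mulVec, dotProduct, mul_comm]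

lemma inner_toLp_star_row_self (A : Matrix (Fin m) (Fin n) ℂ) (i : Fin m) :
    ⟪WithLp.toLp 2 (star (A i)), WithLp.toLp 2 (star (A i))⟫_ℂ = (rowNormSq A i : ℂ) := by
  rw [inner_self_eq_norm_sq_to_K, rowNormSq_eq_norm_sq]
  norm_cast

noncomputable def kaczmarzStep (A : Matrix (Fin m) (Fin n) ℂ) (b : Fin m → ℂ) (u : Fin n → ℂ)
    (i : Fin m) : Fin n → ℂ :=
  u + ((b i - (A *ᵥ u) i) / (rowNormSq A i : ℂ)) • star (A i)

section KaczmarzStep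

variable {A : Matrix (Fin m) (Fin n) ℂ} {b : Fin m → ℂ} {xs : Fin n → ℂ}

lemma toLp_kaczmarzStep_sub (hxs : A *ᵥ xs = b) (u : Fin n → ℂ) (i : Fin m) :
    WithLp.toLp 2 (kaczmarzStep A b u i - xs) =
      WithLp.toLp 2 (u - xs) - (⟪WithLp.toLp 2 (star (A i)), WithLp.toLp 2 (u - xs)⟫_ℂ /
        ⟪WithLp.toLp 2 (star (A i)), WithLp.toLp 2 (star (A i))⟫_ℂ) •
          WithLp.toLp 2 (star (A i)) := by
  rw [inner_toLp_star_row, inner_toLp_star_row_self, mulVec_sub, hxs, kaczmarzStep]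
  ext j
  simp only [PiLp.sub_apply, PiLp.smul_apply, Pi.sub_apply, Pi.add_apply, Pi.smul_apply,
    smul_eq_mul]
  ring

lemma vecNormSq_kaczmarzStep_sub (hxs : A *ᵥ xs = b) (u : Fin n → ℂ) (i : Fin m) :
    vecNormSq (kaczmarzStep A b u i - xs) = vecNormSq (u - xs) - psi A b u i := by
  rw [vecNormSq_eq_norm_sq, toLp_kaczmarzStep_sub hxs, norm_sub_inner_div_inner_self_smul_sq,
    inner_toLp_star_row, ← rowNormSq_eq_norm_sq, ← vecNormSq_eq_norm_sq, psi, mulVec_sub, hxs,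
    Pi.sub_apply, norm_sub_rev]

lemma residual_kaczmarzStep (hxs : A *ᵥ xs = b) (u : Fin n → ℂ) (i : Fin m) :
    b i - (A *ᵥ kaczmarzStep A b u i) i = 0 := by
  have h := inner_sub_inner_div_inner_self_smul (𝕜 := ℂ) (WithLp.toLp 2 (star (A i)))
    (WithLp.toLp 2 (u - xs))
  rw [← toLp_kaczmarzStep_sub hxs, inner_toLp_star_row, mulVec_sub, hxs] at h
  simpa [sub_eq_zero, eq_comm] using h

lemma kaczmarzStep_mem_range {u : Fin n → ℂ} (hu : u ∈ LinearMap.range Aᴴ.mulVecLin) (i : Fin m) :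
    kaczmarzStep A b u i ∈ LinearMap.range Aᴴ.mulVecLin := by
  refine add_mem hu (Submodule.smul_mem _ _ ⟨Pi.single i 1, ?_⟩)
  ext j
  simp

end KaczmarzStep

section Spectrum

variable (A : Matrix (Fin m) (Fin n) ℂ)

lemma finite_setOf_eigenvalue_ne_zero :
    {μ : ℝ | μ ≠ 0 ∧ ∃ i, (isHermitian_conjTranspose_mul_self A).eigenvalues i = μ}.Finite :=
  (Set.finite_range _).subset fun _ hμ => hμ.2

lemma sigmaRSq_le_eigenvalue {i : Fin n}
    (h : (isHermitian_conjTranspose_mul_self A).eigenvalues i ≠ 0) :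
    sigmaRSq A ≤ (isHermitian_conjTranspose_mul_self A).eigenvalues i :=
  csInf_le (finite_setOf_eigenvalue_ne_zero A).bddBelow ⟨h, i, rfl⟩

open scoped ComplexOrder in
lemma sigmaRSq_mul_vecNormSq_le {v : Fin n → ℂ} (hv : v ∈ LinearMap.range Aᴴ.mulVecLin) :
    sigmaRSq A * vecNormSq v ≤ vecNormSq (A *ᵥ v) := by
  set hH := isHermitian_conjTranspose_mul_self A
  have hker : ∀ i, hH.eigenvalues i = 0 →
      ⟪hH.eigenvectorBasis i, WithLp.toLp 2 v⟫_ℂ = 0 := by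
    intro i hi
    obtain ⟨y, rfl⟩ := hv
    have hAB : A *ᵥ hH.eigenvectorBasis i = 0 := (conjTranspose_mul_self_mulVec_eq_zero _ _).1
      (by rw [hH.mulVec_eigenvectorBasis, hi, zero_smul])
    rw [← WithLp.toLp_ofLp (p := 2) (hH.eigenvectorBasis i), mulVecLin_apply,
      inner_toLp_conjTranspose_mulVec, hAB]
    simp
  have hAv : vecNormSq (A *ᵥ v) =
      RCLike.re ⟪WithLp.toLp 2 v, WithLp.toLp 2 ((Aᴴ * A) *ᵥ v)⟫_ℂ := by
    rw [← mulVec_mulVec, inner_toLp_conjTranspose_mulVec, _root_.inner_self_eq_norm_sq,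
      vecNormSq_eq_norm_sq]
  rw [hAv, hH.re_inner_mulVec_eq_sum, vecNormSq_eq_norm_sq,
    ← hH.eigenvectorBasis.sum_sq_norm_inner_right, mul_sum]
  refine sum_le_sum fun i _ => ?_
  by_cases hi : hH.eigenvalues i = 0
  · simp [hker i hi]
  · exact mul_le_mul_of_nonneg_right (sigmaRSq_le_eigenvalue A hi) (sq_nonneg _)

lemma sum_eigenvalues_conjTranspose_mul_self :
    ∑ i, (isHermitian_conjTranspose_mul_self A).eigenvalues i = frobSq A := by
  have htr : (Aᴴ * A).trace = (frobSq A : ℂ) := by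
    simp only [trace, frobSq, diag_apply, mul_apply, conjTranspose_apply, RCLike.star_def,
      Complex.conj_mul', Complex.ofReal_sum, Complex.ofReal_pow]
    exact sum_comm
  have h := (isHermitian_conjTranspose_mul_self A).trace_eq_sum_eigenvalues.symm.trans htr
  apply RCLike.ofReal_injective (K := ℂ)
  rw [RCLike.ofReal_sum, h]
  rfl

lemma two_mul_sigmaRSq_le_frobSq_of_ne (h : sigmaRSq A ≠ frobSq A) :
    2 * sigmaRSq A ≤ frobSq A := by
  set ev := (isHermitian_conjTranspose_mul_self A).eigenvalues
  rcases Set.eq_empty_or_nonempty {μ : ℝ | μ ≠ 0 ∧ ∃ i, ev i = μ} with hS | hS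
  · rw [sigmaRSq, hS, Real.sInf_empty, mul_zero]
    exact frobSq_nonneg A
  obtain ⟨-, i₀, hi₀⟩ := hS.csInf_mem (finite_setOf_eigenvalue_ne_zero A)
  have hsplit : frobSq A = sigmaRSq A + ∑ i ∈ univ.erase i₀, ev i := by
    rw [← sum_eigenvalues_conjTranspose_mul_self, ← add_sum_erase _ _ (mem_univ i₀)]
    exact congrArg (· + _) hi₀
  obtain ⟨i₁, hi₁, hne⟩ := exists_ne_zero_of_sum_ne_zero (s := univ.erase i₀) (f := ev)
    (by intro h0; rw [h0, add_zero] at hsplit; exact h hsplit.symm)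
  have hle : ev i₁ ≤ ∑ i ∈ univ.erase i₀, ev i :=
    single_le_sum (fun i _ => eigenvalues_conjTranspose_mul_self_nonneg A i) hi₁
  linarith [sigmaRSq_le_eigenvalue A hne]

/-- The second alternative is the rank-one case `σ_r(A)² = ‖A‖_F²`. -/
lemma one_sub_sigmaRSq_div_nonneg_or_eq_zero (hm : 2 ≤ m) :
    0 ≤ 1 - sigmaRSq A / (⨆ i : Fin m, ∑ j ∈ univ.erase i, rowNormSq A j) ∨
      1 - sigmaRSq A / frobSq A = 0 := by
  have hγ := frobSq_le_two_mul_iSup_sum_erase hm A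
  have hF := frobSq_nonneg A
  rcases eq_or_ne (sigmaRSq A) (frobSq A) with hσ | hσ
  · rcases eq_or_ne (frobSq A) 0 with h0 | h0
    · left
      rw [hσ, h0, zero_div, sub_zero]
      exact zero_le_one
    · right
      rw [hσ, div_self h0, sub_self]
  · left
    have := two_mul_sigmaRSq_le_frobSq_of_ne A hσ
    rw [sub_nonneg]
    exact div_le_one_of_le₀ (by linarith) (by linarith)

end Spectrum

section Residual

variable {A : Matrix (Fin m) (Fin n) ℂ} {b : Fin m → ℂ} {xs : Fin n → ℂ}

lemma norm_sq_residual_eq_psi_mul (hxs : A *ᵥ xs = b) (u : Fin n → ℂ) (i : Fin m) :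
    ‖b i - (A *ᵥ u) i‖ ^ 2 = psi A b u i * rowNormSq A i := by
  rcases eq_or_ne (rowNormSq A i) 0 with h | h
  -- a zero row has zero residual since the system is consistent, so the junk `ψ_i = 0` is harmless
  · have hrow : WithLp.toLp 2 (star (A i)) = 0 := by
      rw [rowNormSq_eq_norm_sq] at h
      simpa using h
    rw [h, mul_zero, ← hxs, ← Pi.sub_apply, ← mulVec_sub, ← inner_toLp_star_row, hrow,
      inner_zero_left, norm_zero, zero_pow two_ne_zero]
  · rw [psi, div_mul_cancel₀ _ h]

lemma vecNormSq_residual_le (hxs : A *ᵥ xs = b) {u : Fin n → ℂ} {t : ℝ}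
    (ht : ∀ i, psi A b u i ≤ t) (S : Finset (Fin m)) (hS : ∀ i ∉ S, b i - (A *ᵥ u) i = 0) :
    vecNormSq (b - A *ᵥ u) ≤ t * ∑ i ∈ S, rowNormSq A i := by
  rw [vecNormSq, ← sum_subset (subset_univ S) fun i _ hi => by simp [hS i hi], mul_sum]
  refine sum_le_sum fun i _ => ?_
  rw [Pi.sub_apply, norm_sq_residual_eq_psi_mul hxs]
  exact mul_le_mul_of_nonneg_right (ht i) (rowNormSq_nonneg A i)

lemma vecNormSq_kaczmarzStep_sub_le (hxs : A *ᵥ xs = b)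
    (hxs_mem : xs ∈ LinearMap.range Aᴴ.mulVecLin) {u : Fin n → ℂ} (hu : u ∈ LinearMap.range Aᴴ.mulVecLin) {i : Fin m}
    (hi : ∀ j, psi A b u j ≤ psi A b u i) (S : Finset (Fin m))
    (hS : ∀ j ∉ S, b j - (A *ᵥ u) j = 0) {W : ℝ} (hW : ∑ j ∈ S, rowNormSq A j ≤ W) :
    vecNormSq (kaczmarzStep A b u i - xs) ≤ (1 - sigmaRSq A / W) * vecNormSq (u - xs) := by
  have hψ : 0 ≤ psi A b u i := div_nonneg (sq_nonneg _) (rowNormSq_nonneg A i)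
  have hσ : sigmaRSq A * vecNormSq (u - xs) ≤ psi A b u i * W :=
    calc sigmaRSq A * vecNormSq (u - xs) ≤ vecNormSq (A *ᵥ (u - xs)) :=
          sigmaRSq_mul_vecNormSq_le A (sub_mem hu hxs_mem)
      _ = vecNormSq (b - A *ᵥ u) := by
          rw [mulVec_sub, hxs, vecNormSq_eq_norm_sq, vecNormSq_eq_norm_sq, WithLp.toLp_sub,
            WithLp.toLp_sub, norm_sub_rev]
      _ ≤ psi A b u i * ∑ j ∈ S, rowNormSq A j := vecNormSq_residual_le hxs hi S hS
      _ ≤ psi A b u i * W := mul_le_mul_of_nonneg_left hW hψ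
  rw [vecNormSq_kaczmarzStep_sub hxs]
  rcases (((sum_nonneg fun j _ => rowNormSq_nonneg A j).trans hW).eq_or_lt) with hW0 | hW0
  · rw [← hW0, div_zero, sub_zero, one_mul]
    linarith
  · rw [sub_mul, one_mul, div_mul_eq_mul_div]
    linarith [(div_le_iff₀ hW0).2 hσ]

end Residual

theorem stmt3_general {m n : ℕ} (hm : 2 ≤ m) (A : Matrix (Fin m) (Fin n) ℂ) (b : Fin m → ℂ)
    (xs : Fin n → ℂ) (hxs1 : A.mulVec xs = b) (hxs2 : ∃ y, xs = Aᴴ.mulVec y)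
    (x : ℕ → Fin n → ℂ) (idx : ℕ → Fin m)
    (hx0 : ∃ y, x 0 = Aᴴ.mulVec y)
    (hidx : ∀ k, ∀ i, psi A b (x k) i ≤ psi A b (x k) (idx k))
    (hit : ∀ k,
      x (k + 1) = x k
        + ((b (idx k) - A.mulVec (x k) (idx k)) / (rowNormSq A (idx k) : ℂ)) • star (A (idx k)))
    (k : ℕ) :
    vecNormSq (x (k + 1) - xs) ≤
      (1 - sigmaRSq A / (⨆ i : Fin m, ∑ j ∈ Finset.univ.erase i, rowNormSq A j)) ^ k *
        (1 - sigmaRSq A / frobSq A) * vecNormSq (x 0 - xs) := by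
  have hstep (j : ℕ) : x (j + 1) = kaczmarzStep A b (x j) (idx j) := hit j
  have hxs : xs ∈ LinearMap.range Aᴴ.mulVecLin := hxs2.imp fun _ h => h.symm
  have hrange (j : ℕ) : x j ∈ LinearMap.range Aᴴ.mulVecLin := by
    induction j with
    | zero => exact hx0.imp fun _ h => h.symm
    | succ j ih => exact hstep j ▸ kaczmarzStep_mem_range ih (idx j)
  refine le_pow_mul_of_forall_succ_le (E := fun j => vecNormSq (x j - xs))
    (fun j => sum_nonneg fun _ _ => sq_nonneg _) ?_ (fun j => ?_)
    (one_sub_sigmaRSq_div_nonneg_or_eq_zero A hm) k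
  · rw [hstep]
    exact vecNormSq_kaczmarzStep_sub_le hxs1 hxs (hrange 0) (hidx 0) univ (by simp) le_rfl
  · rw [hstep]
    refine vecNormSq_kaczmarzStep_sub_le hxs1 hxs (hrange _) (hidx _) (univ.erase (idx j))
      (fun i hi => ?_) (le_ciSup (f := fun i => ∑ j ∈ univ.erase i, rowNormSq A j)
        (Set.finite_range _).bddAbove (idx j))
    rw [show i = idx j by simpa using hi, hstep]
    exact residual_kaczmarzStep hxs1 _ _

/-- Theorem 2.1, MWRK convergence: for `m ≥ 2`, `x⁰ ∈ range(Aᴴ)`, and MWRK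
iterates `x^{k+1} = x^k + ((b_{i_k} − A_{i_k,:}x^k)/‖A_{i_k,:}‖₂²)(A_{i_k,:})ᴴ` with `i_k`
maximizing `ψ_i(x^k)`, one has for every `k ≥ 0`
`‖x^{k+1} − x_*‖₂² ≤ (1 − σ_r(A)²/γ̃)^k (1 − σ_r(A)²/‖A‖_F²) ‖x⁰ − x_*‖₂²`,
where `γ̃ = max_i Σ_{j ≠ i} ‖A_{j,:}‖₂²`. -/
theorem stmt3 {m n : ℕ} (hm : 2 ≤ m) (A : Matrix (Fin m) (Fin n) ℂ) (b : Fin m → ℂ)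
    (hA : ∀ i, A i ≠ 0)
    (xs : Fin n → ℂ) (hxs1 : A.mulVec xs = b) (hxs2 : ∃ y, xs = Aᴴ.mulVec y)
    (x : ℕ → Fin n → ℂ) (idx : ℕ → Fin m)
    (hx0 : ∃ y, x 0 = Aᴴ.mulVec y)
    (hidx : ∀ k, ∀ i, psi A b (x k) i ≤ psi A b (x k) (idx k))
    (hit : ∀ k,
      x (k + 1) = x k
        + ((b (idx k) - A.mulVec (x k) (idx k)) / (rowNormSq A (idx k) : ℂ)) • star (A (idx k)))
    (k : ℕ) :
    vecNormSq (x (k + 1) - xs) ≤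
      (1 - sigmaRSq A / (⨆ i : Fin m, ∑ j ∈ Finset.univ.erase i, rowNormSq A j)) ^ k *
        (1 - sigmaRSq A / frobSq A) * vecNormSq (x 0 - xs) :=
  stmt3_general hm A b xs hxs1 hxs2 x idx hx0 hidx hit k
end

section
/- For any x ∈ ℂⁿ with b − Ax ≠ 0, define ε(x) = max_{i∈{1,…,m}} ψ_i(x)/(2‖b − Ax‖₂²) + 1/(2‖A‖_F²). Then ε(x)·‖A‖_F² ≥ (1/2)·‖A‖_F²/‖A_{Û(x),:}‖_F² + 1/2. -/
open Matrix Finset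

/-!
Outside `Û(x)` the residual vanishes, and on `Û(x)` we have `|b_i − A_{i,:}x|² = ψ_i(x)‖A_{i,:}‖₂²`,
so `‖b − Ax‖₂² ≤ max_i ψ_i(x) · ‖A_{Û(x),:}‖_F²`. Since
`ε(x)‖A‖_F² = max_i ψ_i(x) ‖A‖_F² / (2‖b − Ax‖₂²) + 1/2`, the claim follows.
-/

section Residual

variable {m n : ℕ} (A : Matrix (Fin m) (Fin n) ℂ) (b : Fin m → ℂ) (x : Fin n → ℂ)

theorem vecNormSq_pos {k : ℕ} {v : Fin k → ℂ} (hv : v ≠ 0) : 0 < vecNormSq v := by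
  obtain ⟨i, hi⟩ := Function.ne_iff.mp hv
  exact Finset.sum_pos' (fun j _ => by positivity)
    ⟨i, Finset.mem_univ i, pow_pos (norm_pos_iff.mpr hi) 2⟩

theorem rowNormSq_pos {i : Fin m} (hi : A i ≠ 0) : 0 < rowNormSq A i := by
  obtain ⟨j, hj⟩ := Function.ne_iff.mp hi
  exact Finset.sum_pos' (fun j _ => by positivity)
    ⟨j, Finset.mem_univ j, pow_pos (norm_pos_iff.mpr hj) 2⟩

theorem frobSq_rowSub (S : Finset (Fin m)) :
    frobSq (rowSub A S) = ∑ i ∈ S, rowNormSq A i :=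
  calc frobSq (rowSub A S) = ∑ i, if i ∈ S then rowNormSq A i else 0 :=
        Finset.sum_congr rfl fun i _ => by by_cases hi : i ∈ S <;> simp [rowSub, rowNormSq, hi]
    _ = ∑ i ∈ S, rowNormSq A i := by rw [Finset.sum_ite_mem, Finset.univ_inter]

theorem frobSq_rowSub_le (S : Finset (Fin m)) : frobSq (rowSub A S) ≤ frobSq A := by
  rw [frobSq_rowSub]
  exact Finset.sum_le_univ_sum_of_nonneg fun i => by unfold rowNormSq; positivity

theorem psi_le_psiMax (i : Fin m) : psi A b x i ≤ psiMax A b x :=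
  le_ciSup (Set.finite_range _).bddAbove i

theorem psi_mul_rowNormSq {i : Fin m} (hi : A i ≠ 0) :
    psi A b x i * rowNormSq A i = ‖(b - A *ᵥ x) i‖ ^ 2 :=
  div_mul_cancel₀ _ (rowNormSq_pos A hi).ne'

theorem vecNormSq_sub_mulVec_le (hA : ∀ i, A i ≠ 0) :
    vecNormSq (b - A *ᵥ x) ≤ psiMax A b x * frobSq (rowSub A (Uhat A b x)) := by
  have hsplit : vecNormSq (b - A *ᵥ x) = ∑ i ∈ Uhat A b x, psi A b x i * rowNormSq A i := by
    rw [Uhat, Finset.sum_filter_of_ne fun i _ hi => left_ne_zero_of_mul hi]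
    exact Finset.sum_congr rfl fun i _ => (psi_mul_rowNormSq A b x (hA i)).symm
  rw [hsplit, frobSq_rowSub, Finset.mul_sum]
  exact Finset.sum_le_sum fun i _ =>
    mul_le_mul_of_nonneg_right (psi_le_psiMax A b x i) (rowNormSq_pos A (hA i)).le

end Residual

/-- for any `x` with `b − Ax ≠ 0` and
`ε(x) = max_i ψ_i(x)/(2‖b − Ax‖₂²) + 1/(2‖A‖_F²)`, one has
`ε(x)·‖A‖_F² ≥ (1/2)·‖A‖_F²/‖A_{Û(x),:}‖_F² + 1/2`. -/
theorem stmt12 {m n : ℕ} (A : Matrix (Fin m) (Fin n) ℂ) (b : Fin m → ℂ)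
    (hA : ∀ i, A i ≠ 0) (x : Fin n → ℂ) (hres : b - A.mulVec x ≠ 0)
    (ε : ℝ)
    (hε : ε = psiMax A b x / (2 * vecNormSq (b - A.mulVec x)) + 1 / (2 * frobSq A)) :
    (1 / 2) * (frobSq A / frobSq (rowSub A (Uhat A b x))) + 1 / 2 ≤ ε * frobSq A := by
  set U := Uhat A b x
  have hr : 0 < vecNormSq (b - A *ᵥ x) := vecNormSq_pos hres
  have hbound := vecNormSq_sub_mulVec_le A b x hA
  have hψ : 0 < psiMax A b x :=
    pos_of_mul_pos_left (hr.trans_le hbound) (by unfold frobSq; positivity)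
  have hFU : 0 < frobSq (rowSub A U) := pos_of_mul_pos_right (hr.trans_le hbound) hψ.le
  have hF : 0 < frobSq A := hFU.trans_le (frobSq_rowSub_le A U)
  have hquot : frobSq A / frobSq (rowSub A U) ≤ psiMax A b x * frobSq A / vecNormSq (b - A *ᵥ x) :=
    calc frobSq A / frobSq (rowSub A U)
        = psiMax A b x * frobSq A / (psiMax A b x * frobSq (rowSub A U)) :=
          (mul_div_mul_left _ _ hψ.ne').symm
      _ ≤ psiMax A b x * frobSq A / vecNormSq (b - A *ᵥ x) :=
          div_le_div_of_nonneg_left (by positivity) hr hbound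
  have hεF : ε * frobSq A = psiMax A b x * frobSq A / vecNormSq (b - A *ᵥ x) / 2 + 1 / 2 := by
    rw [hε]; field_simp
  linarith
end
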